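/- arXiv:2210.00262 — 6 statements merged into one kernel-verified Lean document; each statement's English description precedes it below -/
import Mathlib

section
/- Let τ ≥ 1 be an integer, A and B finite sets, and for each t ∈ {1,…,τ} let K_t be a conditional probability kernel assigning to each input history x_{1:t} ∈ A^t and output history y_{1:t−1} ∈ B^{t−1} a probability distribution K_t(· | x_{1:t}, y_{1:t−1}) on B; define the joint likelihood P(y_{1:τ} | x_{1:τ}) = ∏_{t=1}^τ K_t(y_t | x_{1:t}, y_{1:t−1}). Fix α > 0 and assume the minimal-utility condition: for every t ∈ {1,…,τ}, every pair of input histories x⁺_{1:t−1}, x⁻_{1:t−1} ∈ A^{t−1} and every output history y_{1:t−1} ∈ B^{t−1}, there exist y_t ∈ B and x_t⁺, x_t⁻ ∈ A such that K_t(y_t | (x⁺_{1:t−1}, x_t⁺), y_{1:t−1}) > e^α · K_t(y_t | (x⁻_{1:t−1}, x_t⁻), y_{1:t−1}). Then there exist input sequences x⁺, x⁻ ∈ A^τ and an output sequence y ∈ B^τ with P(y | x⁺) > e^{τα} · P(y | x⁻); in particular, for any ε > 0 with τ ≥ ε/α, the longitudinal mechanism x_{1:τ} ↦ P(· | x_{1:τ})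 is not ε-LDP. -/
/-- The joint likelihood `P(y₁,…,y_τ | x₁,…,x_τ) = ∏ₜ K_t(y_t | x_{1:t}, y_{1:t-1})`
of a longitudinal mechanism given by conditional kernels `K`. -/
noncomputable def jointLikelihood {τ : ℕ} {A B : Type}
    (K : (t : Fin τ) → (Fin (t.1 + 1) → A) → (Fin t.1 → B) → B → ℝ)
    (x : Fin τ → A) (y : Fin τ → B) : ℝ :=
  ∏ t : Fin τ,
    K t (fun i => x (Fin.castLE t.isLt i)) (fun i => y (Fin.castLE t.isLt.le i)) (y t)

section Build

variable {τ : ℕ} {A B : Type}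
variable (K : (t : Fin τ) → (Fin (t.1 + 1) → A) → (Fin t.1 → B) → B → ℝ)
variable (α : ℝ)

noncomputable def ldpBuild
    (hmin : ∀ (t : Fin τ) (xp xm : Fin t.1 → A) (yh : Fin t.1 → B),
      ∃ (b : B) (xtp xtm : A),
        K t (Fin.snoc xp xtp) yh b > Real.exp α * K t (Fin.snoc xm xtm) yh b) :
    (n : ℕ) → n ≤ τ → (Fin n → A) × (Fin n → A) × (Fin n → B)
  | 0, _ => (Fin.elim0, Fin.elim0, Fin.elim0)
  | n + 1, h =>
    let p := ldpBuild hmin n (Nat.le_of_succ_le h)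
    let c := hmin ⟨n, h⟩ p.1 p.2.1 p.2.2
    (Fin.snoc p.1 (Classical.choose (Classical.choose_spec c)),
     Fin.snoc p.2.1 (Classical.choose (Classical.choose_spec (Classical.choose_spec c))),
     Fin.snoc p.2.2 (Classical.choose c))

variable
    (hmin : ∀ (t : Fin τ) (xp xm : Fin t.1 → A) (yh : Fin t.1 → B),
      ∃ (b : B) (xtp xtm : A),
        K t (Fin.snoc xp xtp) yh b > Real.exp α * K t (Fin.snoc xm xtm) yh b)

lemma ldpBuild_castLE (m : ℕ) :
    ∀ (n : ℕ) (hm : m ≤ n) (h : n ≤ τ) (i : Fin m),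
      (ldpBuild K α hmin n h).1 (Fin.castLE hm i) =
          (ldpBuild K α hmin m (hm.trans h)).1 i ∧
      (ldpBuild K α hmin n h).2.1 (Fin.castLE hm i) =
          (ldpBuild K α hmin m (hm.trans h)).2.1 i ∧
      (ldpBuild K α hmin n h).2.2 (Fin.castLE hm i) =
          (ldpBuild K α hmin m (hm.trans h)).2.2 i := by
  intro n
  induction n with
  | zero =>
    intro hm h i
    exact absurd i.2 (by omega)
  | succ n ih =>
    intro hm h i
    rcases Nat.lt_or_ge m (n + 1) with hlt | hge
    · have hm' : m ≤ n := by omega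
      have hcast : Fin.castLE hm i = Fin.castSucc (Fin.castLE hm' i) := by
        ext; simp
      rw [hcast]
      simp only [ldpBuild, Fin.snoc_castSucc]
      exact ih hm' (Nat.le_of_succ_le h) i
    · have : m = n + 1 := by omega
      subst this
      have : Fin.castLE hm i = i := by ext; simp
      rw [this]
      exact ⟨rfl, rfl, rfl⟩

lemma ldpBuild_spec (n : ℕ) (h : n < τ) :
    K ⟨n, h⟩ ((ldpBuild K α hmin (n + 1) h).1)
        ((ldpBuild K α hmin n h.le).2.2)
        ((ldpBuild K α hmin (n + 1) h).2.2 (Fin.last n)) >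
      Real.exp α * K ⟨n, h⟩ ((ldpBuild K α hmin (n + 1) h).2.1)
        ((ldpBuild K α hmin n h.le).2.2)
        ((ldpBuild K α hmin (n + 1) h).2.2 (Fin.last n)) := by
  have hspec := Classical.choose_spec (Classical.choose_spec (Classical.choose_spec
    (hmin ⟨n, h⟩ (ldpBuild K α hmin n h.le).1 (ldpBuild K α hmin n h.le).2.1
      (ldpBuild K α hmin n h.le).2.2)))
  simpa only [ldpBuild, Fin.snoc_last] using hspec

end Build

/-- **LDP cannot be satisfied when τ → ∞.**
If at every time step, for any pair of input histories and any output history, the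
kernel is "not α-LDP" (some output is more than `e^α` times likelier under some
extension of the first history than under some extension of the second), then there
are input sequences `x⁺, x⁻` and an output sequence `y` with
`P(y|x⁺) > e^{τα} · P(y|x⁻)`; in particular for any `ε > 0` with `τ ≥ ε/α` the
longitudinal mechanism is not `ε`-LDP. -/
theorem ldp_impossible_longitudinal
    (τ : ℕ) (hτ : 1 ≤ τ) (A B : Type) [Fintype A] [Fintype B] [Nonempty A] [Nonempty B]
    (K : (t : Fin τ) → (Fin (t.1 + 1) → A) → (Fin t.1 → B) → B → ℝ)
    (hK0 : ∀ t xh yh b, 0 ≤ K t xh yh b)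
    (hK1 : ∀ t xh yh, ∑ b : B, K t xh yh b = 1)
    (α : ℝ) (hα : 0 < α)
    (hmin : ∀ (t : Fin τ) (xp xm : Fin t.1 → A) (yh : Fin t.1 → B),
      ∃ (b : B) (xtp xtm : A),
        K t (Fin.snoc xp xtp) yh b > Real.exp α * K t (Fin.snoc xm xtm) yh b) :
    (∃ (xp xm : Fin τ → A) (y : Fin τ → B),
        jointLikelihood K xp y > Real.exp (τ * α) * jointLikelihood K xm y) ∧
    (∀ ε : ℝ, 0 < ε → ε / α ≤ (τ : ℝ) →
      ¬ (∀ (x₁ x₂ : Fin τ → A) (y : Fin τ → B),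
          jointLikelihood K x₁ y ≤ Real.exp ε * jointLikelihood K x₂ y)) := by
  
  set xp := (ldpBuild K α hmin τ le_rfl).1 with hxp
  set xm := (ldpBuild K α hmin τ le_rfl).2.1 with hxm
  set y := (ldpBuild K α hmin τ le_rfl).2.2 with hy
  -- per-step strict inequality
  have key : ∀ t : Fin τ,
      K t (fun i => xp (Fin.castLE t.isLt i)) (fun i => y (Fin.castLE t.isLt.le i)) (y t) >
        Real.exp α *
          K t (fun i => xm (Fin.castLE t.isLt i)) (fun i => y (Fin.castLE t.isLt.le i)) (y t) := by
    intro t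
    have hxp' : (fun i => xp (Fin.castLE t.isLt i)) =
        (ldpBuild K α hmin (t.1 + 1) t.isLt).1 := by
      funext i; exact (ldpBuild_castLE K α hmin (t.1 + 1) τ t.isLt le_rfl i).1
    have hxm' : (fun i => xm (Fin.castLE t.isLt i)) =
        (ldpBuild K α hmin (t.1 + 1) t.isLt).2.1 := by
      funext i; exact (ldpBuild_castLE K α hmin (t.1 + 1) τ t.isLt le_rfl i).2.1
    have hyh : (fun i => y (Fin.castLE t.isLt.le i)) =
        (ldpBuild K α hmin t.1 t.isLt.le).2.2 := by
      funext i; exact (ldpBuild_castLE K α hmin t.1 τ t.isLt.le le_rfl i).2.2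
    have hyt : y t = (ldpBuild K α hmin (t.1 + 1) t.isLt).2.2 (Fin.last t.1) := by
      have : t = Fin.castLE t.isLt (Fin.last t.1) := by ext; simp
      rw [this]
      exact (ldpBuild_castLE K α hmin (t.1 + 1) τ t.isLt le_rfl (Fin.last t.1)).2.2
    have hspec := ldpBuild_spec K α hmin t.1 t.isLt
    simp only [hxp', hxm', hyh, hyt]
    exact hspec
  set a : Fin τ → ℝ := fun t =>
    K t (fun i => xp (Fin.castLE t.isLt i)) (fun i => y (Fin.castLE t.isLt.le i)) (y t) with ha
  set b : Fin τ → ℝ := fun t =>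
    K t (fun i => xm (Fin.castLE t.isLt i)) (fun i => y (Fin.castLE t.isLt.le i)) (y t) with hb
  have hb0 : ∀ t, 0 ≤ b t := fun t => hK0 _ _ _ _
  have ha0 : ∀ t, 0 < a t := fun t =>
    lt_of_le_of_lt (mul_nonneg (Real.exp_pos α).le (hb0 t)) (key t)
  have hPp : jointLikelihood K xp y = ∏ t : Fin τ, a t := rfl
  have hPm : jointLikelihood K xm y = ∏ t : Fin τ, b t := rfl
  have hprod : (∏ t : Fin τ, a t) > Real.exp (τ * α) * ∏ t : Fin τ, b t := by
    by_cases hz : ∃ t, b t = 0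
    · obtain ⟨t0, ht0⟩ := hz
      have : (∏ t : Fin τ, b t) = 0 :=
        Finset.prod_eq_zero (Finset.mem_univ t0) ht0
      rw [this, mul_zero]
      exact Finset.prod_pos fun t _ => ha0 t
    · push_neg at hz
      have hbpos : ∀ t, 0 < b t := fun t => lt_of_le_of_ne (hb0 t) (Ne.symm (hz t))
      have h1 : (∏ t : Fin τ, Real.exp α * b t) < ∏ t : Fin τ, a t := by
        apply Finset.prod_lt_prod_of_nonempty
        · intro t _; exact mul_pos (Real.exp_pos α) (hbpos t)
        · intro t _; exact key t
        · haveI : Nonempty (Fin τ) := ⟨⟨0, hτ⟩⟩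
          exact Finset.univ_nonempty
      have h2 : (∏ t : Fin τ, Real.exp α * b t) =
          Real.exp (τ * α) * ∏ t : Fin τ, b t := by
        rw [Finset.prod_mul_distrib, Finset.prod_const, Finset.card_univ,
          Fintype.card_fin, ← Real.exp_nat_mul]
      rw [← h2]; exact h1
  constructor
  · exact ⟨xp, xm, y, by rw [hPp, hPm]; exact hprod⟩
  · intro ε hε hτα hLDP
    have hεle : ε ≤ τ * α := by
      rw [div_le_iff₀ hα] at hτα; linarith
    have hPm0 : 0 ≤ jointLikelihood K xm y := by
      rw [hPm]; exact Finset.prod_nonneg fun t _ => hb0 t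
    have h1 := hLDP xp xm y
    have h2 : Real.exp ε * jointLikelihood K xm y ≤
        Real.exp (τ * α) * jointLikelihood K xm y :=
      mul_le_mul_of_nonneg_right (Real.exp_le_exp.2 hεle) hPm0
    have := lt_of_le_of_lt (h1.trans h2) (by rw [hPp, hPm] at *; exact hprod)
    exact lt_irrefl _ this
end

section
/- Let V be a finite set, g ≥ 2 an integer, 0 < ε₁ < ε∞ real numbers, and ε_IRR = ln((e^{ε∞+ε₁} − 1)/(e^{ε∞} − e^{ε₁})). Let ℋ be a finite nonempty family of functions from V to {1,…,g}, and let M be the randomized mechanism that, on input v ∈ V, samples H uniformly at random from ℋ and outputs (H, GRR(GRR(H(v); ε∞); ε_IRR)), where both GRR stages act on {1,…,g} with independent randomness. Then M satisfies ε₁-LDP: for all v₁, v₂ ∈ V and every output (H, x'') ∈ ℋ × {1,…,g}, Pr[M(v₁) = (H, x'')] ≤ e^{ε₁} · Pr[M(v₂) = (H, x'')]. -/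
set_option maxHeartbeats 1000000

lemma loloha_sum_eval (g : ℕ) (p₁ q₁ p₂ q₂ : ℝ) (a x : Fin g) :
    ∑ z : Fin g, (if z = a then p₁ else q₁) * (if x = z then p₂ else q₂)
      = if x = a then p₁ * p₂ + ((g : ℝ) - 1) * (q₁ * q₂)
        else p₁ * q₂ + q₁ * p₂ + ((g : ℝ) - 2) * (q₁ * q₂) := by
  by_cases hxa : x = a
  · subst hxa
    rw [if_pos rfl]
    have h : ∀ z : Fin g, (if z = x then p₁ else q₁) * (if x = z then p₂ else q₂)
        = q₁ * q₂ + (if z = x then p₁ * p₂ - q₁ * q₂ else 0) := by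
      intro z
      by_cases h : z = x
      · subst h; simp
      · rw [if_neg h, if_neg (fun hh => h hh.symm), if_neg h]; ring
    rw [Finset.sum_congr rfl (fun z _ => h z), Finset.sum_add_distrib,
      Finset.sum_const, Finset.sum_ite_eq' Finset.univ x (fun _ => p₁ * p₂ - q₁ * q₂)]
    simp [Finset.card_univ]
    ring
  · rw [if_neg hxa]
    have h : ∀ z : Fin g, (if z = a then p₁ else q₁) * (if x = z then p₂ else q₂)
        = q₁ * q₂ + ((if z = a then p₁ * q₂ - q₁ * q₂ else 0)
            + (if z = x then q₁ * p₂ - q₁ * q₂ else 0)) := by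
      intro z
      by_cases h1 : z = a
      · subst h1
        rw [if_pos rfl, if_neg hxa, if_pos rfl, if_neg (fun hh : z = x => hxa hh.symm)]
        ring
      · rw [if_neg h1, if_neg h1]
        by_cases h2 : z = x
        · subst h2; rw [if_pos rfl, if_pos rfl]; ring
        · rw [if_neg (fun hh : x = z => h2 hh.symm), if_neg h2]; ring
    rw [Finset.sum_congr rfl (fun z _ => h z), Finset.sum_add_distrib,
      Finset.sum_add_distrib, Finset.sum_const,
      Finset.sum_ite_eq' Finset.univ a (fun _ => p₁ * q₂ - q₁ * q₂),
      Finset.sum_ite_eq' Finset.univ x (fun _ => q₁ * p₂ - q₁ * q₂)]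
    simp [Finset.card_univ]
    ring

/-- **Single report LDP of LOLOHA (hash + PRR + IRR).**
The mechanism picks `H` uniformly from a finite nonempty family `ℋ` of hash
functions `V → Fin g`, applies `GRR(·; εinf)` to `H(v)` and then `GRR(·; ε_IRR)`
to the result, with independent randomness, where
`ε_IRR = ln((e^{εinf+ε₁} − 1)/(e^{εinf} − e^{ε₁}))`. On input `v` the probability
of the output `(H, x'')` is
`(1/|ℋ|) · ∑_z (p₁ if z = H(v) else q₁)·(p₂ if x'' = z else q₂)` for `H ∈ ℋ`.
This mechanism satisfies `ε₁`-LDP. -/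
theorem loloha_single_report_ldp
    (V : Type) [Fintype V] [DecidableEq V] (g : ℕ) (hg : 2 ≤ g)
    (ε₁ εinf : ℝ) (h₁ : 0 < ε₁) (h₂ : ε₁ < εinf)
    (εIRR : ℝ)
    (hεIRR : εIRR = Real.log ((Real.exp (εinf + ε₁) - 1) / (Real.exp εinf - Real.exp ε₁)))
    (ℋ : Finset (V → Fin g)) (hℋ : ℋ.Nonempty)
    (p₁ q₁ p₂ q₂ : ℝ)
    (hp₁ : p₁ = Real.exp εinf / (Real.exp εinf + g - 1))
    (hq₁ : q₁ = 1 / (Real.exp εinf + g - 1))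
    (hp₂ : p₂ = Real.exp εIRR / (Real.exp εIRR + g - 1))
    (hq₂ : q₂ = 1 / (Real.exp εIRR + g - 1))
    (M : V → (V → Fin g) → Fin g → ℝ)
    (hM : ∀ v H x'', M v H x'' =
      (if H ∈ ℋ then (1 : ℝ) / ℋ.card else 0) *
        ∑ z : Fin g, (if z = H v then p₁ else q₁) * (if x'' = z then p₂ else q₂)) :
    ∀ (v₁ v₂ : V) (H : V → Fin g) (x'' : Fin g),
      M v₁ H x'' ≤ Real.exp ε₁ * M v₂ H x'' := by
  intro v₁ v₂ H x''
  rw [hM, hM]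
  by_cases hH : H ∈ ℋ
  · rw [if_pos hH]
    -- abbreviations
    set a := Real.exp εinf with ha
    set E := Real.exp ε₁ with hE
    set b := Real.exp εIRR with hb
    have hE1 : 1 < E := by
      rw [hE, ← Real.exp_zero]; exact Real.exp_lt_exp.2 h₁
    have haE : E < a := by rw [hE, ha]; exact Real.exp_lt_exp.2 h₂
    have ha1 : 1 < a := lt_trans hE1 haE
    have hnum : 0 < a * E - 1 := by nlinarith
    have hden : 0 < a - E := by linarith
    have hbval : b = (a * E - 1) / (a - E) := by
      rw [hb, hεIRR, ha, hE, ← Real.exp_add]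
      rw [Real.exp_log (div_pos (by rw [Real.exp_add]; exact hnum) hden)]
    have hbkey : b * (a - E) = a * E - 1 := by
      rw [hbval, div_mul_cancel₀ _ (ne_of_gt hden)]
    have hbpos : 0 < b := Real.exp_pos _
    have hg2 : (2 : ℝ) ≤ (g : ℝ) := by exact_mod_cast hg
    have hD₁ : 0 < a + (g : ℝ) - 1 := by linarith
    have hD₂ : 0 < b + (g : ℝ) - 1 := by linarith
    have hq₁pos : 0 < q₁ := by rw [hq₁]; positivity
    have hq₂pos : 0 < q₂ := by rw [hq₂]; positivity
    have hp₁q : p₁ = a * q₁ := by rw [hp₁, hq₁, ha]; ring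
    have hp₂q : p₂ = b * q₂ := by rw [hp₂, hq₂, hb]; ring
    rw [loloha_sum_eval, loloha_sum_eval]
    have hc : (0 : ℝ) ≤ 1 / ℋ.card := by positivity
    -- key scalar inequalities
    have hqq : 0 < q₁ * q₂ := mul_pos hq₁pos hq₂pos
    have hb1 : 1 ≤ b := by nlinarith [hbkey]
    have hmin : 0 ≤ p₁ * q₂ + q₁ * p₂ + ((g : ℝ) - 2) * (q₁ * q₂) := by
      rw [hp₁q, hp₂q]
      have t1 : 0 ≤ a * q₁ * q₂ := by positivity
      have t2 : 0 ≤ q₁ * (b * q₂) := by positivity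
      have t3 : 0 ≤ ((g : ℝ) - 2) * (q₁ * q₂) := mul_nonneg (by linarith) hqq.le
      linarith
    have hmm : p₁ * q₂ + q₁ * p₂ + ((g : ℝ) - 2) * (q₁ * q₂)
        ≤ p₁ * p₂ + ((g : ℝ) - 1) * (q₁ * q₂) := by
      rw [hp₁q, hp₂q]
      nlinarith [mul_nonneg hqq.le (mul_nonneg (by linarith : (0:ℝ) ≤ a - 1) (by linarith : (0:ℝ) ≤ b - 1))]
    have hkey : p₁ * p₂ + ((g : ℝ) - 1) * (q₁ * q₂)
        ≤ E * (p₁ * q₂ + q₁ * p₂ + ((g : ℝ) - 2) * (q₁ * q₂)) := by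
      rw [hp₁q, hp₂q]
      have h1 : b * a - b * E = a * E - 1 := by linarith [hbkey]
      nlinarith [mul_pos hq₁pos hq₂pos,
        mul_nonneg (mul_nonneg (le_of_lt hq₁pos) (le_of_lt hq₂pos))
          (mul_nonneg (by linarith : (0:ℝ) ≤ E - 1) (by linarith : (0:ℝ) ≤ (g:ℝ) - 2))]
    -- finish by cases on the two ifs
    have hS : (if x'' = H v₁ then p₁ * p₂ + ((g : ℝ) - 1) * (q₁ * q₂)
          else p₁ * q₂ + q₁ * p₂ + ((g : ℝ) - 2) * (q₁ * q₂))
        ≤ E * (if x'' = H v₂ then p₁ * p₂ + ((g : ℝ) - 1) * (q₁ * q₂)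
          else p₁ * q₂ + q₁ * p₂ + ((g : ℝ) - 2) * (q₁ * q₂)) := by
      split <;> split <;>
        nlinarith [mul_nonneg (by linarith : (0:ℝ) ≤ E - 1) hmin,
          mul_nonneg (by linarith : (0:ℝ) ≤ E - 1) (hmin.trans hmm)]
    have final : ∀ S T : ℝ, S ≤ E * T →
        (1 : ℝ) / ℋ.card * S ≤ E * ((1 : ℝ) / ℋ.card * T) := by
      intro S T h
      calc (1 : ℝ) / ℋ.card * S ≤ (1 : ℝ) / ℋ.card * (E * T) :=
            mul_le_mul_of_nonneg_left h hc
        _ = E * ((1 : ℝ) / ℋ.card * T) := by ring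
    exact final _ _ hS
  · simp [hH]
end

section
/- Let V be a finite set of size k, g ≥ 2 an integer, 0 < ε₁ < ε∞, ε_IRR = ln((e^{ε∞+ε₁}−1)/(e^{ε∞}−e^{ε₁})), and set p₁ = e^{ε∞}/(e^{ε∞}+g−1), q₁' = 1/g, p₂ = e^{ε_IRR}/(e^{ε_IRR}+g−1), q₂ = 1/(e^{ε_IRR}+g−1). Let ℋ be a pairwise-independent family of hash functions V → {1,…,g}. There are n users; user u holds v_u ∈ V and, independently across users, samples H_u uniformly from ℋ and reports x''_u = GRR(GRR(H_u(v_u); ε∞); ε_IRR) on {1,…,g}. Let f(v) = |{u : v_u = v}|/n, C(v) = |{u : H_u(v) = x''_u}|, and f̂(v) = (C(v) − n·q₁'·(p₂−q₂) − n·q₂)/(n·(p₁−q₁')·(p₂−q₂)). Then for every β ∈ (0,1), with probability at least 1 − β, max_{v ∈ V} |f̂(v) − f(v)| < sqrt( k / (4·n·β·(p₁−q₁')²·(p₂−q₂)²) ). -/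
noncomputable section

/-- One user's sample point in the LOLOHA generative model: the hash function,
the memoized PRR output, and the reported IRR output. -/
abbrev LolohaSample (V : Type) (g : ℕ) : Type := (V → Fin g) × Fin g × Fin g

/-- Probability weight of a joint outcome `ω` of `n` independent users, where user `u`
holds `vu u`, samples `H_u` uniformly from `ℋ`, memoizes `z_u = GRR(H_u(v_u); ε∞)`
(keep-probability `p₁`, switch-probability `q₁`) and reports
`x''_u = GRR(z_u; ε_IRR)` (probabilities `p₂`, `q₂`). -/
def lolohaWeight (V : Type) [Fintype V] [DecidableEq V] (g n : ℕ)
    (ℋ : Finset (V → Fin g)) (p₁ q₁ p₂ q₂ : ℝ)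
    (vu : Fin n → V) (ω : Fin n → LolohaSample V g) : ℝ :=
  ∏ u : Fin n,
    ((if (ω u).1 ∈ ℋ then (1 : ℝ) / ℋ.card else 0) *
     (if (ω u).2.1 = (ω u).1 (vu u) then p₁ else q₁) *
     (if (ω u).2.2 = (ω u).2.1 then p₂ else q₂))

/-- The server-side support count `C(v) = |{u : H_u(v) = x''_u}|`. -/
def lolohaCount (V : Type) [Fintype V] [DecidableEq V] (g n : ℕ)
    (v : V) (ω : Fin n → LolohaSample V g) : ℕ :=
  (Finset.univ.filter fun u : Fin n => (ω u).1 v = (ω u).2.2).card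

/-- The LOLOHA frequency estimator
`f̂(v) = (C(v) − n·q₁'·(p₂−q₂) − n·q₂) / (n·(p₁−q₁')·(p₂−q₂))`. -/
def lolohaEst (V : Type) [Fintype V] [DecidableEq V] (g n : ℕ)
    (p₁ q₁' p₂ q₂ : ℝ) (v : V) (ω : Fin n → LolohaSample V g) : ℝ :=
  ((lolohaCount V g n v ω : ℝ) - n * q₁' * (p₂ - q₂) - n * q₂) /
    (n * (p₁ - q₁') * (p₂ - q₂))

/-- The true frequency `f(v) = |{u : v_u = v}| / n`. -/
def lolohaTrueFreq (V : Type) [DecidableEq V] (n : ℕ) (vu : Fin n → V) (v : V) : ℝ :=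
  ((Finset.univ.filter fun u : Fin n => vu u = v).card : ℝ) / n

end

open scoped Classical

/-!
Say that user `u`'s report supports `v` when `H_u(v) = x''_u`. Reports are independent across
users, and the report of a user holding `w` supports `v` with probability
`1/g + [w = v] (p₁ - 1/g) (p₂ - q₂)`: for `v = w` the two GRR steps compose, while for `v ≠ w`
pairwise independence makes `(H(v), H(w))` uniform on `{1,…,g}²`, and since both GRR kernels are
doubly stochastic the probability is `1/g`. As `q₁' (p₂ - q₂) + q₂ = 1/g`, the quantity
`n (p₁ - 1/g) (p₂ - q₂) (f̂(v) - f(v))` is the sum of the `n` centred support indicators, whose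
variance is at most `n/4`. Chebyshev's inequality at the stated threshold then bounds
`P(|f̂(v) - f(v)| ≥ t)` by `β/k`, and a union bound over the `k` values of `v` concludes.
-/

open Finset Real

section ProductWeight

variable {ι α : Type*} [Fintype ι] [DecidableEq ι] [Fintype α] {w : ι → α → ℝ}

theorem sum_prod_eq_one (hw : ∀ i, ∑ a, w i a = 1) : ∑ ω : ι → α, ∏ i, w i (ω i) = 1 := by
  rw [← Fintype.prod_sum (κ := fun _ => α) w]
  simp [hw]

theorem sum_prod_mul_prod (w F : ι → α → ℝ) :
    ∑ ω : ι → α, (∏ i, w i (ω i)) * ∏ i, F i (ω i) = ∏ i, ∑ a, w i a * F i a := by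
  simp_rw [← prod_mul_distrib]
  exact (Fintype.prod_sum fun i a => w i a * F i a).symm

theorem sum_prod_mul_apply (hw : ∀ i, ∑ a, w i a = 1) (i : ι) (f : α → ℝ) :
    ∑ ω : ι → α, (∏ l, w l (ω l)) * f (ω i) = ∑ a, w i a * f a := by
  have := sum_prod_mul_prod w fun l a => if l = i then f a else 1
  simpa only [Fintype.prod_ite_eq', mul_ite, mul_one, sum_ite_irrel, hw] using this

theorem sum_prod_mul_apply_mul_apply (hw : ∀ i, ∑ a, w i a = 1) {i j : ι} (hij : i ≠ j)
    (f g : α → ℝ) :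
    ∑ ω : ι → α, (∏ l, w l (ω l)) * (f (ω i) * g (ω j)) =
      (∑ a, w i a * f a) * ∑ a, w j a * g a := by
  have := sum_prod_mul_prod w fun l a => (if l = i then f a else 1) * (if l = j then g a else 1)
  have hF : ∀ l, ∑ a, w l a * ((if l = i then f a else 1) * (if l = j then g a else 1)) =
      (if l = i then ∑ a, w i a * f a else 1) * (if l = j then ∑ a, w j a * g a else 1) := by
    intro l
    by_cases hi : l = i <;> by_cases hj : l = j <;> simp_all
  simpa only [prod_mul_distrib, Fintype.prod_ite_eq', hF] using this

theorem sum_prod_mul_sum_sq {Y : ι → α → ℝ} (hw : ∀ i, ∑ a, w i a = 1)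
    (hY : ∀ i, ∑ a, w i a * Y i a = 0) :
    ∑ ω : ι → α, (∏ l, w l (ω l)) * (∑ i, Y i (ω i)) ^ 2 = ∑ i, ∑ a, w i a * Y i a ^ 2 := by
  simp_rw [sq, sum_mul_sum, mul_sum]
  rw [sum_comm]
  refine sum_congr rfl fun i _ => ?_
  rw [sum_comm, sum_eq_single i]
  · exact sum_prod_mul_apply hw i fun a => Y i a * Y i a
  · intro j _ hji
    rw [sum_prod_mul_apply_mul_apply hw (Ne.symm hji), hY i, zero_mul]
  · simp

end ProductWeight

theorem sum_filter_le_abs_le_div_sq {Ω : Type*} (s : Finset Ω) {W : Ω → ℝ} (hW : ∀ ω, 0 ≤ W ω)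
    (f : Ω → ℝ) {t : ℝ} (ht : 0 < t) :
    ∑ ω ∈ s with t ≤ |f ω|, W ω ≤ (∑ ω ∈ s, W ω * f ω ^ 2) / t ^ 2 := by
  rw [le_div_iff₀ (by positivity), sum_mul]
  calc ∑ ω ∈ s with t ≤ |f ω|, W ω * t ^ 2
      ≤ ∑ ω ∈ s with t ≤ |f ω|, W ω * f ω ^ 2 := by
        refine sum_le_sum fun ω hω => mul_le_mul_of_nonneg_left ?_ (hW ω)
        rw [← sq_abs (f ω)]
        exact pow_le_pow_left₀ ht.le (mem_filter.1 hω).2 2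
    _ ≤ ∑ ω ∈ s, W ω * f ω ^ 2 :=
        sum_le_sum_of_subset_of_nonneg (filter_subset _ _) fun ω _ _ =>
          mul_nonneg (hW ω) (sq_nonneg _)

theorem sum_filter_not_forall_le {Ω ι : Type*} [Fintype ι] (s : Finset Ω) {W : Ω → ℝ}
    (hW : ∀ ω, 0 ≤ W ω) (P : ι → Ω → Prop) [∀ i, DecidablePred (P i)] :
    ∑ ω ∈ s with ¬ ∀ i, P i ω, W ω ≤ ∑ i, ∑ ω ∈ s with ¬ P i ω, W ω := by
  simp_rw [sum_filter]
  rw [sum_comm]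
  refine sum_le_sum fun ω _ => ?_
  have hterm : ∀ i, 0 ≤ if ¬ P i ω then W ω else 0 := fun i => by split_ifs <;> simp [hW ω]
  by_cases h : ∀ i, P i ω
  · rw [if_neg (not_not_intro h)]
    exact sum_nonneg fun i _ => hterm i
  · obtain ⟨i, hi⟩ := not_forall.1 h
    calc (if ¬ ∀ i, P i ω then W ω else 0) = if ¬ P i ω then W ω else 0 := by simp [h, hi]
      _ ≤ _ := single_le_sum (fun j _ => hterm j) (mem_univ i)

theorem sum_mul_boole_sub_sq_le {α : Type*} (s : Finset α) {w : α → ℝ} (hw : ∑ a ∈ s, w a = 1)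
    (S : α → Prop) [DecidablePred S] :
    ∑ a ∈ s, w a * ((if S a then 1 else 0) - ∑ b ∈ s, w b * if S b then 1 else 0) ^ 2 ≤ 1 / 4 := by
  set μ := ∑ b ∈ s, w b * if S b then 1 else 0
  have hsq : ∀ a, w a * ((if S a then 1 else 0) - μ) ^ 2 =
      (1 - 2 * μ) * (w a * if S a then 1 else 0) + μ ^ 2 * w a := by
    intro a; split_ifs <;> ring
  rw [sum_congr rfl fun a _ => hsq a, sum_add_distrib, ← mul_sum, ← mul_sum, hw]
  nlinarith [sq_nonneg (1 - 2 * μ)]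

section GRR

noncomputable def grrP (ε : ℝ) (g : ℕ) : ℝ := exp ε / (exp ε + g - 1)

noncomputable def grrQ (ε : ℝ) (g : ℕ) : ℝ := 1 / (exp ε + g - 1)

variable {ε : ℝ} {g : ℕ}

theorem exp_add_natCast_sub_one_pos (hg : 1 ≤ g) : 0 < exp ε + g - 1 := by
  have : (1 : ℝ) ≤ g := by exact_mod_cast hg
  linarith [exp_pos ε]

theorem grrP_add_mul_grrQ (hg : 1 ≤ g) : grrP ε g + (g - 1) * grrQ ε g = 1 := by
  have := (exp_add_natCast_sub_one_pos (ε := ε) hg).ne'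
  unfold grrP grrQ; field_simp; ring

theorem grrQ_pos (hg : 1 ≤ g) : 0 < grrQ ε g :=
  one_div_pos.2 (exp_add_natCast_sub_one_pos hg)

theorem grrQ_lt_grrP (hε : 0 < ε) (hg : 1 ≤ g) : grrQ ε g < grrP ε g :=
  div_lt_div_of_pos_right (one_lt_exp_iff.2 hε) (exp_add_natCast_sub_one_pos hg)

theorem inv_lt_grrP (hε : 0 < ε) (hg : 2 ≤ g) : (g : ℝ)⁻¹ < grrP ε g := by
  have hgR : (2 : ℝ) ≤ g := by exact_mod_cast hg
  have he : 1 < exp ε := one_lt_exp_iff.2 hε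
  rw [grrP, inv_lt_iff_one_lt_mul₀' (by positivity), mul_div_assoc',
    one_lt_div (exp_add_natCast_sub_one_pos (by omega))]
  nlinarith

theorem one_lt_exp_add_sub_one_div {a b : ℝ} (hb : 0 < b) (hba : b < a) :
    1 < (exp (a + b) - 1) / (exp a - exp b) := by
  rw [one_lt_div (sub_pos.2 (exp_lt_exp.2 hba)), exp_add]
  nlinarith [one_lt_exp_iff.2 hb, exp_pos a]

end GRR

section PairwiseIndependent

variable {V β : Type*} [Fintype β] [DecidableEq β]

theorem sum_mul_sq_eq_card_mul_sum_sum (ℋ : Finset (V → β)) {v w : V} {g : ℕ}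
    (hpi : ∀ a b : β, #{H ∈ ℋ | H v = a ∧ H w = b} * g ^ 2 = #ℋ) (F : β → β → ℝ) :
    (∑ H ∈ ℋ, F (H v) (H w)) * g ^ 2 = #ℋ * ∑ a, ∑ b, F a b := by
  rw [← sum_fiberwise ℋ (fun H => (H v, H w)), Fintype.sum_prod_type, sum_mul, mul_sum]
  refine sum_congr rfl fun a _ => ?_
  rw [sum_mul, mul_sum]
  refine sum_congr rfl fun b _ => ?_
  have hfib : ∑ H ∈ ℋ with (H v, H w) = (a, b), F (H v) (H w) =
      #{H ∈ ℋ | H v = a ∧ H w = b} * F a b := by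
    simp only [Prod.mk.injEq]
    rw [sum_congr rfl fun H hH => by rw [(mem_filter.1 hH).2.1, (mem_filter.1 hH).2.2],
      sum_const, nsmul_eq_mul]
  rw [hfib, mul_right_comm, ← hpi a b]
  push_cast; ring

end PairwiseIndependent

section Model

variable {V : Type} [Fintype V] {g : ℕ} {p q p₁ q₁ p₂ q₂ : ℝ}

/-- GRR's probability of reporting `b` on input `a`. -/
def grrKernel (p q : ℝ) (a b : Fin g) : ℝ := if b = a then p else q

noncomputable def hashWeight (ℋ : Finset (V → Fin g)) (H : V → Fin g) : ℝ :=
  if H ∈ ℋ then 1 / #ℋ else 0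

noncomputable def userWeight (ℋ : Finset (V → Fin g)) (p₁ q₁ p₂ q₂ : ℝ) (v : V)
    (s : LolohaSample V g) : ℝ :=
  hashWeight ℋ s.1 * grrKernel p₁ q₁ (s.1 v) s.2.1 * grrKernel p₂ q₂ s.2.1 s.2.2

theorem userWeight_nonneg (hp₁ : 0 ≤ p₁) (hq₁ : 0 ≤ q₁) (hp₂ : 0 ≤ p₂) (hq₂ : 0 ≤ q₂)
    (ℋ : Finset (V → Fin g)) (v : V) (s : LolohaSample V g) :
    0 ≤ userWeight ℋ p₁ q₁ p₂ q₂ v s := by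
  unfold userWeight hashWeight grrKernel
  positivity

theorem sum_grrKernel (a : Fin g) : ∑ b, grrKernel p q a b = p + (g - 1) * q := by
  have h : ∀ b, grrKernel p q a b = (if b = a then p - q else 0) + q := fun b => by
    unfold grrKernel; split_ifs <;> ring
  simp only [h, sum_add_distrib, Fintype.sum_ite_eq', sum_const, card_univ, Fintype.card_fin,
    nsmul_eq_mul]
  ring

theorem sum_grrKernel_left (b : Fin g) : ∑ a, grrKernel p q a b = p + (g - 1) * q := by
  simp only [grrKernel, eq_comm (a := b)]
  exact sum_grrKernel b

theorem sum_grrKernel_mul_grrKernel_self (a : Fin g) :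
    ∑ z, grrKernel p₁ q₁ a z * grrKernel p₂ q₂ z a = p₁ * p₂ + (g - 1) * (q₁ * q₂) := by
  rw [← sum_grrKernel a]
  refine sum_congr rfl fun z _ => ?_
  simp only [grrKernel, eq_comm (a := a)]
  split_ifs <;> rfl

theorem sum_sum_sum_grrKernel_mul_grrKernel (h₁ : p₁ + (g - 1) * q₁ = 1)
    (h₂ : p₂ + (g - 1) * q₂ = 1) :
    ∑ a : Fin g, ∑ b, ∑ z, grrKernel p₁ q₁ b z * grrKernel p₂ q₂ z a = g := by
  have hrow : ∀ a : Fin g, ∑ b, ∑ z, grrKernel p₁ q₁ b z * grrKernel p₂ q₂ z a = 1 := fun a => by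
    rw [sum_comm]
    simp_rw [← sum_mul, sum_grrKernel_left, h₁, one_mul]
    rw [sum_grrKernel_left, h₂]
  simp [hrow]

variable [DecidableEq V]

theorem lolohaWeight_eq_prod_userWeight {n : ℕ} (ℋ : Finset (V → Fin g)) (p₁ q₁ p₂ q₂ : ℝ)
    (vu : Fin n → V) (ω : Fin n → LolohaSample V g) :
    lolohaWeight V g n ℋ p₁ q₁ p₂ q₂ vu ω = ∏ u, userWeight ℋ p₁ q₁ p₂ q₂ (vu u) (ω u) :=
  rfl

theorem sum_hashWeight_mul (ℋ : Finset (V → Fin g)) (F : (V → Fin g) → ℝ) :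
    ∑ H, hashWeight ℋ H * F H = (∑ H ∈ ℋ, F H) / #ℋ := by
  simp only [hashWeight, ite_mul, zero_mul, sum_ite_mem, univ_inter, sum_div]
  exact sum_congr rfl fun H _ => by ring

theorem sum_hashWeight {ℋ : Finset (V → Fin g)} (hℋ : ℋ.Nonempty) :
    ∑ H, hashWeight ℋ H = 1 := by
  have : (#ℋ : ℝ) ≠ 0 := by exact_mod_cast hℋ.card_pos.ne'
  simpa [this] using sum_hashWeight_mul ℋ 1

theorem sum_hashWeight_mul_const {ℋ : Finset (V → Fin g)} (hℋ : ℋ.Nonempty) (c : ℝ) :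
    ∑ H, hashWeight ℋ H * c = c := by
  rw [← sum_mul, sum_hashWeight hℋ, one_mul]

theorem sum_userWeight_mul (ℋ : Finset (V → Fin g)) (v : V)
    (F : (V → Fin g) → Fin g → Fin g → ℝ) :
    ∑ s, userWeight ℋ p₁ q₁ p₂ q₂ v s * F s.1 s.2.1 s.2.2 =
      ∑ H, hashWeight ℋ H * ∑ z, grrKernel p₁ q₁ (H v) z * ∑ x, grrKernel p₂ q₂ z x * F H z x := by
  simp only [userWeight, Fintype.sum_prod_type, mul_sum, mul_assoc]

theorem sum_userWeight {ℋ : Finset (V → Fin g)} (hℋ : ℋ.Nonempty)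
    (h₁ : p₁ + (g - 1) * q₁ = 1) (h₂ : p₂ + (g - 1) * q₂ = 1) (v : V) :
    ∑ s, userWeight ℋ p₁ q₁ p₂ q₂ v s = 1 := by
  simpa only [mul_one, ← mul_sum, sum_grrKernel, h₁, h₂, sum_hashWeight hℋ]
    using sum_userWeight_mul (p₁ := p₁) (q₁ := q₁) (p₂ := p₂) (q₂ := q₂) ℋ v fun _ _ _ => 1

theorem sum_userWeight_mul_support {ℋ : Finset (V → Fin g)} (hℋ : ℋ.Nonempty)
    (hpi : ∀ v w : V, v ≠ w → ∀ a b : Fin g, #{H ∈ ℋ | H v = a ∧ H w = b} * g ^ 2 = #ℋ)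
    (hg : g ≠ 0) (h₁ : p₁ + (g - 1) * q₁ = 1) (h₂ : p₂ + (g - 1) * q₂ = 1) (w v : V) :
    ∑ s, userWeight ℋ p₁ q₁ p₂ q₂ w s * (if s.1 v = s.2.2 then 1 else 0) =
      (g : ℝ)⁻¹ + if w = v then (p₁ - (g : ℝ)⁻¹) * (p₂ - q₂) else 0 := by
  have hgR : (g : ℝ) ≠ 0 := by exact_mod_cast hg
  rw [sum_userWeight_mul ℋ w fun H _ x => if H v = x then 1 else 0]
  simp only [mul_ite, mul_one, mul_zero, Fintype.sum_ite_eq]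
  split_ifs with hwv
  · subst hwv
    simp only [sum_grrKernel_mul_grrKernel_self, sum_hashWeight_mul_const hℋ]
    field_simp
    linear_combination (g * q₂) * h₁ + h₂
  · have hℋ0 : (#ℋ : ℝ) ≠ 0 := by exact_mod_cast hℋ.card_pos.ne'
    have := sum_mul_sq_eq_card_mul_sum_sum ℋ (hpi v w (Ne.symm hwv))
      fun a b => ∑ z, grrKernel p₁ q₁ b z * grrKernel p₂ q₂ z a
    rw [sum_sum_sum_grrKernel_mul_grrKernel h₁ h₂] at this
    rw [sum_hashWeight_mul, add_zero, div_eq_iff hℋ0, eq_comm, inv_mul_eq_div, div_eq_iff hgR]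
    refine mul_right_cancel₀ hgR ?_
    linear_combination -this

theorem lolohaWeight_nonneg {n : ℕ} (hp₁ : 0 ≤ p₁) (hq₁ : 0 ≤ q₁) (hp₂ : 0 ≤ p₂) (hq₂ : 0 ≤ q₂)
    (ℋ : Finset (V → Fin g)) (vu : Fin n → V) (ω : Fin n → LolohaSample V g) :
    0 ≤ lolohaWeight V g n ℋ p₁ q₁ p₂ q₂ vu ω :=
  prod_nonneg fun u _ => userWeight_nonneg hp₁ hq₁ hp₂ hq₂ ℋ (vu u) (ω u)

theorem sum_lolohaWeight {n : ℕ} {ℋ : Finset (V → Fin g)} (hℋ : ℋ.Nonempty)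
    (h₁ : p₁ + (g - 1) * q₁ = 1) (h₂ : p₂ + (g - 1) * q₂ = 1) (vu : Fin n → V) :
    ∑ ω, lolohaWeight V g n ℋ p₁ q₁ p₂ q₂ vu ω = 1 :=
  sum_prod_eq_one fun u => sum_userWeight hℋ h₁ h₂ (vu u)

end Model

section Estimator

variable {V : Type} [Fintype V] [DecidableEq V] {g n : ℕ} {p₁ q₁ p₂ q₂ : ℝ}

theorem lolohaEst_sub_lolohaTrueFreq {q₁' : ℝ} (hn : n ≠ 0) (ha : p₁ - q₁' ≠ 0)
    (hb : p₂ - q₂ ≠ 0) (hq : q₁' * (p₂ - q₂) + q₂ = q₁') (vu : Fin n → V) (v : V)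
    (ω : Fin n → LolohaSample V g) :
    lolohaEst V g n p₁ q₁' p₂ q₂ v ω - lolohaTrueFreq V n vu v =
      (∑ u, ((if (ω u).1 v = (ω u).2.2 then 1 else 0) -
        (q₁' + if vu u = v then (p₁ - q₁') * (p₂ - q₂) else 0))) /
        (n * (p₁ - q₁') * (p₂ - q₂)) := by
  have hnR : (n : ℝ) ≠ 0 := by exact_mod_cast hn
  simp only [lolohaEst, lolohaTrueFreq, lolohaCount, sum_sub_distrib, sum_add_distrib, sum_ite,
    sum_const, card_univ, Fintype.card_fin, nsmul_eq_mul, mul_one]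
  field_simp
  linear_combination (-n : ℝ) * hq

theorem sum_lolohaWeight_mul_sq_le {ℋ : Finset (V → Fin g)} (hℋ : ℋ.Nonempty)
    (hpi : ∀ v w : V, v ≠ w → ∀ a b : Fin g, #{H ∈ ℋ | H v = a ∧ H w = b} * g ^ 2 = #ℋ)
    (hg : g ≠ 0) (hn : n ≠ 0) (h₁ : p₁ + (g - 1) * q₁ = 1) (h₂ : p₂ + (g - 1) * q₂ = 1)
    (ha : p₁ - (g : ℝ)⁻¹ ≠ 0) (hb : p₂ - q₂ ≠ 0) (vu : Fin n → V) (v : V) :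
    ∑ ω, lolohaWeight V g n ℋ p₁ q₁ p₂ q₂ vu ω *
        (lolohaEst V g n p₁ (g : ℝ)⁻¹ p₂ q₂ v ω - lolohaTrueFreq V n vu v) ^ 2 ≤
      1 / (4 * n * (p₁ - (g : ℝ)⁻¹) ^ 2 * (p₂ - q₂) ^ 2) := by
  have hgR : (g : ℝ) ≠ 0 := by exact_mod_cast hg
  have hnR : (n : ℝ) ≠ 0 := by exact_mod_cast hn
  have hq : (g : ℝ)⁻¹ * (p₂ - q₂) + q₂ = (g : ℝ)⁻¹ := by
    field_simp
    linear_combination h₂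
  have hw := sum_userWeight (p₁ := p₁) (q₁ := q₁) (p₂ := p₂) (q₂ := q₂) hℋ h₁ h₂
  set X : LolohaSample V g → ℝ := fun s => if s.1 v = s.2.2 then 1 else 0
  set μ : Fin n → ℝ := fun u => ∑ s, userWeight ℋ p₁ q₁ p₂ q₂ (vu u) s * X s
  have hμ : ∀ u, μ u = (g : ℝ)⁻¹ + if vu u = v then (p₁ - (g : ℝ)⁻¹) * (p₂ - q₂) else 0 :=
    fun u => sum_userWeight_mul_support hℋ hpi hg h₁ h₂ (vu u) v
  have hcentered : ∀ u, ∑ s, userWeight ℋ p₁ q₁ p₂ q₂ (vu u) s * (X s - μ u) = 0 := fun u => by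
    simp only [mul_sub, sum_sub_distrib, ← sum_mul, hw, one_mul, μ, sub_self]
  have hvar : ∀ u, ∑ s, userWeight ℋ p₁ q₁ p₂ q₂ (vu u) s * (X s - μ u) ^ 2 ≤ 1 / 4 :=
    fun u => sum_mul_boole_sub_sq_le univ (hw (vu u)) _
  simp_rw [lolohaEst_sub_lolohaTrueFreq hn ha hb hq vu v, ← hμ, div_pow, mul_div_assoc', ← sum_div,
    lolohaWeight_eq_prod_userWeight]
  rw [sum_prod_mul_sum_sq (fun u => hw (vu u)) hcentered, div_le_iff₀ (by positivity)]
  calc ∑ u, ∑ s, userWeight ℋ p₁ q₁ p₂ q₂ (vu u) s * (X s - μ u) ^ 2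
      ≤ ∑ _u : Fin n, (1 / 4 : ℝ) := sum_le_sum fun u _ => hvar u
    _ = _ := by
      rw [sum_const, card_univ, Fintype.card_fin, nsmul_eq_mul, div_mul_eq_mul_div, one_mul,
        eq_div_iff (by positivity)]
      ring

theorem sum_lolohaWeight_filter_le_abs_le {ℋ : Finset (V → Fin g)} (hℋ : ℋ.Nonempty)
    (hpi : ∀ v w : V, v ≠ w → ∀ a b : Fin g, #{H ∈ ℋ | H v = a ∧ H w = b} * g ^ 2 = #ℋ)
    (hg : g ≠ 0) (hn : n ≠ 0) (h₁ : p₁ + (g - 1) * q₁ = 1) (h₂ : p₂ + (g - 1) * q₂ = 1)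
    (hq₁ : 0 ≤ q₁) (hq₂ : 0 ≤ q₂) (ha : 0 < p₁ - (g : ℝ)⁻¹) (hb : 0 < p₂ - q₂)
    (vu : Fin n → V) (v : V) {t : ℝ} (ht : 0 < t) :
    ∑ ω with t ≤ |lolohaEst V g n p₁ (g : ℝ)⁻¹ p₂ q₂ v ω - lolohaTrueFreq V n vu v|,
        lolohaWeight V g n ℋ p₁ q₁ p₂ q₂ vu ω ≤
      1 / (4 * n * (p₁ - (g : ℝ)⁻¹) ^ 2 * (p₂ - q₂) ^ 2) / t ^ 2 := by
  have hp₁ : 0 ≤ p₁ := by linarith [inv_nonneg.2 (Nat.cast_nonneg (α := ℝ) g)]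
  have hW := lolohaWeight_nonneg hp₁ hq₁ (show 0 ≤ p₂ by linarith) hq₂ ℋ vu
  refine (sum_filter_le_abs_le_div_sq univ hW _ ht).trans ?_
  gcongr
  exact sum_lolohaWeight_mul_sq_le hℋ hpi hg hn h₁ h₂ ha.ne' hb.ne' vu v

end Estimator

theorem loloha_utility_of_stochastic_kernels {V : Type} [Fintype V] [DecidableEq V] {k g n : ℕ}
    (hk : Fintype.card V = k) (hg : g ≠ 0) (hn : n ≠ 0) {p₁ q₁ p₂ q₂ : ℝ}
    (h₁ : p₁ + (g - 1) * q₁ = 1) (h₂ : p₂ + (g - 1) * q₂ = 1) (hq₁ : 0 ≤ q₁) (hq₂ : 0 ≤ q₂)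
    (ha : 0 < p₁ - (g : ℝ)⁻¹) (hb : 0 < p₂ - q₂) {ℋ : Finset (V → Fin g)} (hℋ : ℋ.Nonempty)
    (hpi : ∀ v w : V, v ≠ w → ∀ a b : Fin g, #{H ∈ ℋ | H v = a ∧ H w = b} * g ^ 2 = #ℋ)
    (vu : Fin n → V) {β : ℝ} (hβ : 0 < β) :
    1 - β ≤
      ∑ ω with ∀ v : V, |lolohaEst V g n p₁ (g : ℝ)⁻¹ p₂ q₂ v ω - lolohaTrueFreq V n vu v| <
          √((k : ℝ) / (4 * n * β * (p₁ - (g : ℝ)⁻¹) ^ 2 * (p₂ - q₂) ^ 2)),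
        lolohaWeight V g n ℋ p₁ q₁ p₂ q₂ vu ω := by
  have hp₁ : 0 ≤ p₁ := by linarith [inv_nonneg.2 (Nat.cast_nonneg (α := ℝ) g)]
  have hW := lolohaWeight_nonneg hp₁ hq₁ (show 0 ≤ p₂ by linarith) hq₂ ℋ vu
  set t := √((k : ℝ) / (4 * n * β * (p₁ - (g : ℝ)⁻¹) ^ 2 * (p₂ - q₂) ^ 2))
  have htail : ∀ v, ∑ ω with ¬ |lolohaEst V g n p₁ (g : ℝ)⁻¹ p₂ q₂ v ω -
      lolohaTrueFreq V n vu v| < t, lolohaWeight V g n ℋ p₁ q₁ p₂ q₂ vu ω ≤ β / k := by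
    intro v
    have hk0 : (0 : ℝ) < k := by rw [← hk]; exact_mod_cast Fintype.card_pos_iff.2 ⟨v⟩
    have hn0 : (0 : ℝ) < n := by exact_mod_cast Nat.pos_of_ne_zero hn
    have ht : 0 < t := sqrt_pos.2 (by positivity)
    simp_rw [not_lt]
    refine (sum_lolohaWeight_filter_le_abs_le hℋ hpi hg hn h₁ h₂ hq₁ hq₂ ha hb vu v ht).trans_eq ?_
    rw [sq_sqrt (by positivity)]
    generalize p₁ - (g : ℝ)⁻¹ = a at ha ⊢
    generalize p₂ - q₂ = b at hb ⊢
    field_simp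
  have hβk : ∑ _v : V, β / k ≤ β := by
    rw [sum_const, card_univ, hk, nsmul_eq_mul]
    rcases eq_or_ne (k : ℝ) 0 with h | h
    · simp [h, hβ.le]
    · rw [mul_div_cancel₀ _ h]
  have hunion := (sum_filter_not_forall_le univ hW _).trans (sum_le_sum fun v _ => htail v)
  have hsplit := sum_filter_add_sum_filter_not univ
    (fun ω => ∀ v, |lolohaEst V g n p₁ (g : ℝ)⁻¹ p₂ q₂ v ω - lolohaTrueFreq V n vu v| < t)
    (lolohaWeight V g n ℋ p₁ q₁ p₂ q₂ vu)
  rw [sum_lolohaWeight hℋ h₁ h₂] at hsplit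
  linarith

theorem loloha_utility_guarantee_general
    (V : Type) [Fintype V] [DecidableEq V] (k g n : ℕ)
    (hk : Fintype.card V = k) (hg : 2 ≤ g) (hn : 1 ≤ n)
    (ε₁ εinf : ℝ) (h₁ : 0 < ε₁) (h₂ : ε₁ < εinf)
    (εIRR : ℝ)
    (hεIRR : εIRR = Real.log ((Real.exp (εinf + ε₁) - 1) / (Real.exp εinf - Real.exp ε₁)))
    (p₁ q₁ q₁' p₂ q₂ : ℝ)
    (hp₁ : p₁ = Real.exp εinf / (Real.exp εinf + g - 1))
    (hq₁ : q₁ = 1 / (Real.exp εinf + g - 1))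
    (hq₁' : q₁' = 1 / (g : ℝ))
    (hp₂ : p₂ = Real.exp εIRR / (Real.exp εIRR + g - 1))
    (hq₂ : q₂ = 1 / (Real.exp εIRR + g - 1))
    (ℋ : Finset (V → Fin g)) (hne : ℋ.Nonempty)
    (hpi : ∀ v w : V, v ≠ w → ∀ a b : Fin g,
      (ℋ.filter fun H => H v = a ∧ H w = b).card * g ^ 2 = ℋ.card)
    (vu : Fin n → V)
    (β : ℝ) (hβ0 : 0 < β) :
    1 - β ≤
      ∑ ω ∈ Finset.univ.filter (fun ω : Fin n → LolohaSample V g =>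
          ∀ v : V, |lolohaEst V g n p₁ q₁' p₂ q₂ v ω - lolohaTrueFreq V n vu v| <
            Real.sqrt ((k : ℝ) / (4 * n * β * (p₁ - q₁') ^ 2 * (p₂ - q₂) ^ 2))),
        lolohaWeight V g n ℋ p₁ q₁ p₂ q₂ vu ω := by
  have hg1 : 1 ≤ g := by omega
  have hεIRR0 : 0 < εIRR := hεIRR ▸ log_pos (one_lt_exp_add_sub_one_div h₁ h₂)
  rw [hq₁', one_div]
  have hp₁q₁ : p₁ + (g - 1) * q₁ = 1 := by rw [hp₁, hq₁]; exact grrP_add_mul_grrQ hg1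
  have hp₂q₂ : p₂ + (g - 1) * q₂ = 1 := by rw [hp₂, hq₂]; exact grrP_add_mul_grrQ hg1
  have hq₁0 : 0 ≤ q₁ := by rw [hq₁]; exact (grrQ_pos hg1).le
  have hq₂0 : 0 ≤ q₂ := by rw [hq₂]; exact (grrQ_pos hg1).le
  have ha : 0 < p₁ - (g : ℝ)⁻¹ := by rw [hp₁]; exact sub_pos.2 (inv_lt_grrP (h₁.trans h₂) hg)
  have hb : 0 < p₂ - q₂ := by rw [hp₂, hq₂]; exact sub_pos.2 (grrQ_lt_grrP hεIRR0 hg1)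
  exact loloha_utility_of_stochastic_kernels hk (by omega) (by omega) hp₁q₁ hp₂q₂ hq₁0 hq₂0 ha hb
    hne hpi vu hβ0

/-- **Asymptotic utility guarantee of LOLOHA.** Under the LOLOHA generative model,
for every `β ∈ (0,1)`, with probability at least `1 − β`,
`max_{v ∈ V} |f̂(v) − f(v)| < sqrt(k / (4·n·β·(p₁−q₁')²·(p₂−q₂)²))`. -/
theorem loloha_utility_guarantee
    (V : Type) [Fintype V] [DecidableEq V] (k g n : ℕ)
    (hk : Fintype.card V = k) (hg : 2 ≤ g) (hn : 1 ≤ n)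
    (ε₁ εinf : ℝ) (h₁ : 0 < ε₁) (h₂ : ε₁ < εinf)
    (εIRR : ℝ)
    (hεIRR : εIRR = Real.log ((Real.exp (εinf + ε₁) - 1) / (Real.exp εinf - Real.exp ε₁)))
    (p₁ q₁ q₁' p₂ q₂ : ℝ)
    (hp₁ : p₁ = Real.exp εinf / (Real.exp εinf + g - 1))
    (hq₁ : q₁ = 1 / (Real.exp εinf + g - 1))
    (hq₁' : q₁' = 1 / (g : ℝ))
    (hp₂ : p₂ = Real.exp εIRR / (Real.exp εIRR + g - 1))
    (hq₂ : q₂ = 1 / (Real.exp εIRR + g - 1))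
    (ℋ : Finset (V → Fin g)) (hne : ℋ.Nonempty)
    (hpi : ∀ v w : V, v ≠ w → ∀ a b : Fin g,
      (ℋ.filter fun H => H v = a ∧ H w = b).card * g ^ 2 = ℋ.card)
    (vu : Fin n → V)
    (β : ℝ) (hβ0 : 0 < β) (hβ1 : β < 1) :
    1 - β ≤
      ∑ ω ∈ Finset.univ.filter (fun ω : Fin n → LolohaSample V g =>
          ∀ v : V, |lolohaEst V g n p₁ q₁' p₂ q₂ v ω - lolohaTrueFreq V n vu v| <
            Real.sqrt ((k : ℝ) / (4 * n * β * (p₁ - q₁') ^ 2 * (p₂ - q₂) ^ 2))),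
        lolohaWeight V g n ℋ p₁ q₁ p₂ q₂ vu ω :=
  loloha_utility_guarantee_general V k g n hk hg hn ε₁ εinf h₁ h₂ εIRR hεIRR p₁ q₁ q₁' p₂ q₂ hp₁ hq₁
    hq₁' hp₂ hq₂ ℋ hne hpi vu β hβ0
end

section
/- Under the LOLOHA generative model — V finite of size k, g ≥ 2, 0 < ε₁ < ε∞, ε_IRR = ln((e^{ε∞+ε₁}−1)/(e^{ε∞}−e^{ε₁})), p₁ = e^{ε∞}/(e^{ε∞}+g−1), q₁' = 1/g, p₂ = e^{ε_IRR}/(e^{ε_IRR}+g−1), q₂ = 1/(e^{ε_IRR}+g−1); n independent users, user u holding v_u ∈ V, sampling H_u uniformly from a pairwise-independent family ℋ of hash functions V → {1,…,g} and reporting x''_u = GRR(GRR(H_u(v_u); ε∞); ε_IRR) — the estimator f̂(v) = (C(v) − n·q₁'·(p₂−q₂) − n·q₂)/(n·(p₁−q₁')·(p₂−q₂)), with C(v) = |{u : H_u(v) = x''_u}|, is unbiased: E[f̂(v)] = f(v) = |{u : v_u = v}|/n for every v ∈ V. -/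
/-!
A generalized randomized response with parameters `(p, q)` sends a test function `f` on its
outputs to `q • ∑ f + (p - q) • f (input)`. Applying this to the two GRR layers of user `u`, the
probability that the report supports `v`, i.e. `H_u v = x''_u`, is affine in the collision
probability `Pr[H_u v = H_u v_u]`, which is `1` when `v_u = v` and `1 / g` otherwise by pairwise
independence. This makes the mean of that indicator `q₁' (p₂ - q₂) + q₂`, plus
`(p₁ - q₁') (p₂ - q₂)` when `v_u = v`. Since users are independent, `E[C(v)]` is the sum of these
means, and the estimator removes the constant part and divides by the slope.
-/

open Finset

theorem sum_ite_eq_else_mul {α R : Type*} [Fintype α] [DecidableEq α] [CommRing R]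
    (a : α) (p q : R) (f : α → R) :
    ∑ z, (if z = a then p else q) * f z = q * ∑ z, f z + (p - q) * f a := by
  have h (z : α) :
      (if z = a then p else q) * f z = q * f z + if z = a then (p - q) * f z else 0 := by
    split_ifs <;> ring
  simp only [h, sum_add_distrib, ← mul_sum, sum_ite_eq', mem_univ, if_true]

theorem sum_pi_prod_mul_sum {ι α R : Type*} [Fintype ι] [DecidableEq ι] [Fintype α]
    [CommSemiring R] (w f : ι → α → R) (hw : ∀ i, ∑ a, w i a = 1) :
    ∑ ω : ι → α, (∏ i, w i (ω i)) * ∑ i, f i (ω i) = ∑ i, ∑ a, w i a * f i a := by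
  simp_rw [mul_sum]
  rw [sum_comm]
  refine sum_congr rfl fun i _ => ?_
  have hsplit (ω : ι → α) : (∏ j, w j (ω j)) * f i (ω i) =
      ∏ j, w j (ω j) * (if j = i then f j (ω j) else 1) := by
    rw [prod_mul_distrib, prod_ite_eq', if_pos (mem_univ i)]
  have hfactor (j : ι) : ∑ a, w j a * (if j = i then f j a else 1) =
      if j = i then ∑ a, w i a * f i a else 1 := by
    split_ifs with hj
    · subst hj; rfl
    · exact (sum_congr rfl fun a _ => mul_one (w j a)).trans (hw j)
  simp_rw [hsplit]
  rw [← Fintype.prod_sum fun j a => w j a * if j = i then f j a else 1]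
  simp_rw [hfactor, prod_ite_eq', if_pos (mem_univ i)]

theorem card_filter_apply_eq_apply_mul {V : Type*} {g : ℕ} (hg : 0 < g)
    (ℋ : Finset (V → Fin g)) {x v : V}
    (hpi : ∀ a : Fin g, (ℋ.filter fun H => H x = a ∧ H v = a).card * g ^ 2 = ℋ.card) :
    (ℋ.filter fun H => H x = H v).card * g = ℋ.card := by
  have hfibre : (ℋ.filter fun H => H x = H v).card =
      ∑ a : Fin g, (ℋ.filter fun H => H x = a ∧ H v = a).card := by
    rw [card_eq_sum_card_fiberwise (f := fun H => H x) (t := univ) fun _ _ => mem_univ _]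
    refine sum_congr rfl fun a _ => ?_
    rw [filter_filter]
    congr 1
    exact filter_congr fun H _ =>
      ⟨fun ⟨hxv, hxa⟩ => ⟨hxa, hxv ▸ hxa⟩, fun ⟨hxa, hva⟩ => ⟨hxa.trans hva.symm, hxa⟩⟩
  apply Nat.eq_of_mul_eq_mul_right hg
  calc (ℋ.filter fun H => H x = H v).card * g * g
      = ∑ a : Fin g, (ℋ.filter fun H => H x = a ∧ H v = a).card * g ^ 2 := by
        rw [hfibre, ← sum_mul]; ring
    _ = ℋ.card * g := by simp [hpi, mul_comm]

section UserWeight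

variable {V : Type} [Fintype V] [DecidableEq V] {g : ℕ} (ℋ : Finset (V → Fin g))
  (p₁ q₁ p₂ q₂ : ℝ)

noncomputable def lolohaUserWeight (x : V) (s : LolohaSample V g) : ℝ :=
  (if s.1 ∈ ℋ then (1 : ℝ) / ℋ.card else 0) *
    (if s.2.1 = s.1 x then p₁ else q₁) * (if s.2.2 = s.2.1 then p₂ else q₂)

theorem lolohaWeight_eq_prod {n : ℕ} (vu : Fin n → V) (ω : Fin n → LolohaSample V g) :
    lolohaWeight V g n ℋ p₁ q₁ p₂ q₂ vu ω =
      ∏ u, lolohaUserWeight ℋ p₁ q₁ p₂ q₂ (vu u) (ω u) :=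
  rfl

variable {p₂ q₂} in
theorem sum_lolohaUserWeight_mul (hnorm₂ : p₂ + (g - 1) * q₂ = 1) (x : V)
    (φ : (V → Fin g) → Fin g → ℝ) :
    ∑ s, lolohaUserWeight ℋ p₁ q₁ p₂ q₂ x s * φ s.1 s.2.2 =
      (∑ H ∈ ℋ, ((q₁ + (p₁ - q₁) * q₂) * ∑ y, φ H y +
        (p₁ - q₁) * (p₂ - q₂) * φ H (H x))) / ℋ.card := by
  have hstep (H : V → Fin g) :
      ∑ z, (if z = H x then p₁ else q₁) * ∑ y, (if y = z then p₂ else q₂) * φ H y =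
        (q₁ + (p₁ - q₁) * q₂) * ∑ y, φ H y + (p₁ - q₁) * (p₂ - q₂) * φ H (H x) := by
    simp_rw [sum_ite_eq_else_mul, sum_add_distrib, ← mul_sum, sum_const, card_univ,
      Fintype.card_fin, nsmul_eq_mul]
    linear_combination (q₁ * ∑ y, φ H y) * hnorm₂
  have hhash (H : V → Fin g) :
      ∑ zy : Fin g × Fin g, lolohaUserWeight ℋ p₁ q₁ p₂ q₂ x (H, zy) * φ H zy.2 =
        (if H ∈ ℋ then (1 : ℝ) / ℋ.card else 0) *
          ((q₁ + (p₁ - q₁) * q₂) * ∑ y, φ H y + (p₁ - q₁) * (p₂ - q₂) * φ H (H x)) := by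
    rw [Fintype.sum_prod_type, ← hstep]
    simp only [lolohaUserWeight, mul_sum, mul_assoc]
  rw [Fintype.sum_prod_type]
  simp_rw [hhash, ite_mul, zero_mul, sum_ite_mem, univ_inter, one_div_mul_eq_div, ← sum_div]

variable {p₁ q₁ p₂ q₂}

theorem sum_lolohaUserWeight (hne : ℋ.Nonempty) (hnorm₁ : p₁ + (g - 1) * q₁ = 1)
    (hnorm₂ : p₂ + (g - 1) * q₂ = 1) (x : V) :
    ∑ s, lolohaUserWeight ℋ p₁ q₁ p₂ q₂ x s = 1 := by
  have h := sum_lolohaUserWeight_mul ℋ p₁ q₁ hnorm₂ x fun _ _ => 1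
  have hterm :
      (q₁ + (p₁ - q₁) * q₂) * ∑ _y : Fin g, (1 : ℝ) + (p₁ - q₁) * (p₂ - q₂) * 1 = 1 := by
    simp only [sum_const, card_univ, Fintype.card_fin, nsmul_eq_mul, mul_one]
    linear_combination hnorm₁ + (p₁ - q₁) * hnorm₂
  rw [sum_congr rfl fun _ _ => hterm, sum_const, nsmul_one,
    div_self (by exact_mod_cast hne.card_pos.ne')] at h
  simpa only [mul_one] using h

theorem sum_lolohaUserWeight_mul_ite (hg : 0 < g) (hne : ℋ.Nonempty)
    (hnorm₁ : p₁ + (g - 1) * q₁ = 1) (hnorm₂ : p₂ + (g - 1) * q₂ = 1) {x v : V}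
    (hpi : v ≠ x → ∀ a : Fin g, (ℋ.filter fun H => H v = a ∧ H x = a).card * g ^ 2 = ℋ.card) :
    ∑ s, lolohaUserWeight ℋ p₁ q₁ p₂ q₂ x s * (if s.1 v = s.2.2 then 1 else 0) =
      1 / g * (p₂ - q₂) + q₂ + if x = v then (p₁ - 1 / g) * (p₂ - q₂) else 0 := by
  have h := sum_lolohaUserWeight_mul ℋ p₁ q₁ hnorm₂ x fun H y => if H v = y then 1 else 0
  simp only [sum_ite_eq, mem_univ, if_true, mul_one] at h
  rw [h, sum_add_distrib, sum_const, ← mul_sum, sum_boole, nsmul_eq_mul]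
  have hg' : (g : ℝ) ≠ 0 := by exact_mod_cast hg.ne'
  split_ifs with hxv
  · subst hxv
    rw [filter_true_of_mem fun _ _ => rfl]
    field_simp
    linear_combination (1 - (p₂ - q₂)) * hnorm₁ + (p₁ - q₁ - 1) * hnorm₂
  · have hcol : ((ℋ.filter fun H => H v = H x).card : ℝ) * g = ℋ.card := by
      exact_mod_cast card_filter_apply_eq_apply_mul hg ℋ (hpi (Ne.symm hxv))
    rw [eq_div_of_mul_eq hg' hcol]
    field_simp
    linear_combination hnorm₁ + (p₁ - q₁ - 1) * hnorm₂

theorem sum_lolohaWeight_mul_lolohaEst {n : ℕ} {q₁' : ℝ} (vu : Fin n → V) (v : V)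
    (hmass : ∀ x, ∑ s, lolohaUserWeight ℋ p₁ q₁ p₂ q₂ x s = 1)
    (hmean : ∀ x, ∑ s, lolohaUserWeight ℋ p₁ q₁ p₂ q₂ x s * (if s.1 v = s.2.2 then 1 else 0) =
      q₁' * (p₂ - q₂) + q₂ + if x = v then (p₁ - q₁') * (p₂ - q₂) else 0)
    (hd : (p₁ - q₁') * (p₂ - q₂) ≠ 0) :
    ∑ ω, lolohaWeight V g n ℋ p₁ q₁ p₂ q₂ vu ω * lolohaEst V g n p₁ q₁' p₂ q₂ v ω =
      lolohaTrueFreq V n vu v := by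
  have htotal : ∑ ω, lolohaWeight V g n ℋ p₁ q₁ p₂ q₂ vu ω = 1 := by
    simp_rw [lolohaWeight_eq_prod]
    rw [← Fintype.prod_sum fun u s => lolohaUserWeight ℋ p₁ q₁ p₂ q₂ (vu u) s]
    simp only [hmass, prod_const_one]
  have hcount : ∑ ω, lolohaWeight V g n ℋ p₁ q₁ p₂ q₂ vu ω * lolohaCount V g n v ω =
      n * (q₁' * (p₂ - q₂) + q₂) +
        (univ.filter fun u => vu u = v).card * ((p₁ - q₁') * (p₂ - q₂)) := by
    have hindicator (ω : Fin n → LolohaSample V g) :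
        (lolohaCount V g n v ω : ℝ) = ∑ u, if (ω u).1 v = (ω u).2.2 then 1 else 0 := by
      rw [lolohaCount, card_filter]
      push_cast
      rfl
    simp_rw [lolohaWeight_eq_prod, hindicator]
    rw [sum_pi_prod_mul_sum (fun u => lolohaUserWeight ℋ p₁ q₁ p₂ q₂ (vu u))
      (fun _ s => if s.1 v = s.2.2 then 1 else 0) fun u => hmass (vu u)]
    simp_rw [hmean, sum_add_distrib, sum_const, card_univ, Fintype.card_fin, nsmul_eq_mul,
      ← sum_filter, sum_const, nsmul_eq_mul]
    ring
  calc ∑ ω, lolohaWeight V g n ℋ p₁ q₁ p₂ q₂ vu ω * lolohaEst V g n p₁ q₁' p₂ q₂ v ω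
      = (∑ ω, lolohaWeight V g n ℋ p₁ q₁ p₂ q₂ vu ω * lolohaCount V g n v ω -
          (n * q₁' * (p₂ - q₂) + n * q₂) * ∑ ω, lolohaWeight V g n ℋ p₁ q₁ p₂ q₂ vu ω) /
            (n * (p₁ - q₁') * (p₂ - q₂)) := by
        rw [mul_sum, ← sum_sub_distrib, sum_div]
        refine sum_congr rfl fun ω _ => ?_
        rw [lolohaEst]
        ring
    _ = lolohaTrueFreq V n vu v := by
        rw [hcount, htotal, lolohaTrueFreq, ← mul_div_mul_right _ (n : ℝ) hd]
        congr 1 <;> ring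

end UserWeight

theorem grr_keep_add_switch {e m : ℝ} (h : e + m - 1 ≠ 0) :
    e / (e + m - 1) + (m - 1) * (1 / (e + m - 1)) = 1 := by
  field_simp
  ring

theorem grr_switch_lt_keep {e m : ℝ} (he : 1 < e) (hm : 1 ≤ m) :
    1 / (e + m - 1) < e / (e + m - 1) :=
  div_lt_div_of_pos_right he (by linarith)

theorem one_div_lt_grr_keep {e m : ℝ} (he : 1 < e) (hm : 1 < m) :
    1 / m < e / (e + m - 1) := by
  rw [div_lt_div_iff₀ (by linarith) (by linarith)]
  nlinarith

theorem one_lt_exp_add_sub_one_div_exp_sub_exp {a b : ℝ} (hb : 0 < b) (hba : b < a) :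
    1 < (Real.exp (a + b) - 1) / (Real.exp a - Real.exp b) := by
  rw [one_lt_div (sub_pos.2 (Real.exp_lt_exp.2 hba)), Real.exp_add]
  nlinarith [Real.one_lt_exp_iff.2 hb, Real.exp_pos a]

theorem loloha_estimator_unbiased_general
    (V : Type) [Fintype V] [DecidableEq V] (g n : ℕ)
    (hg : 2 ≤ g)
    (ε₁ εinf : ℝ) (h₁ : 0 < ε₁) (h₂ : ε₁ < εinf)
    (εIRR : ℝ)
    (hεIRR : εIRR = Real.log ((Real.exp (εinf + ε₁) - 1) / (Real.exp εinf - Real.exp ε₁)))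
    (p₁ q₁ q₁' p₂ q₂ : ℝ)
    (hp₁ : p₁ = Real.exp εinf / (Real.exp εinf + g - 1))
    (hq₁ : q₁ = 1 / (Real.exp εinf + g - 1))
    (hq₁' : q₁' = 1 / (g : ℝ))
    (hp₂ : p₂ = Real.exp εIRR / (Real.exp εIRR + g - 1))
    (hq₂ : q₂ = 1 / (Real.exp εIRR + g - 1))
    (ℋ : Finset (V → Fin g)) (hne : ℋ.Nonempty)
    (hpi : ∀ v w : V, v ≠ w → ∀ a b : Fin g,
      (ℋ.filter fun H => H v = a ∧ H w = b).card * g ^ 2 = ℋ.card)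
    (vu : Fin n → V)
    (v : V) :
    ∑ ω : Fin n → LolohaSample V g,
        lolohaWeight V g n ℋ p₁ q₁ p₂ q₂ vu ω *
          lolohaEst V g n p₁ q₁' p₂ q₂ v ω =
      lolohaTrueFreq V n vu v := by
  have hg₁ : (1 : ℝ) < g := by exact_mod_cast hg
  have he₁ : 1 < Real.exp εinf := Real.one_lt_exp_iff.2 (h₁.trans h₂)
  have he₂ : 1 < Real.exp εIRR := by
    have hratio := one_lt_exp_add_sub_one_div_exp_sub_exp h₁ h₂
    rwa [hεIRR, Real.exp_log (one_pos.trans hratio)]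
  have hnorm₁ : p₁ + (g - 1) * q₁ = 1 := by
    rw [hp₁, hq₁]
    exact grr_keep_add_switch (by linarith)
  have hnorm₂ : p₂ + (g - 1) * q₂ = 1 := by
    rw [hp₂, hq₂]
    exact grr_keep_add_switch (by linarith)
  have hd : (p₁ - q₁') * (p₂ - q₂) ≠ 0 := by
    rw [hq₁', hp₁, hp₂, hq₂]
    exact mul_ne_zero (sub_pos.2 (one_div_lt_grr_keep he₁ hg₁)).ne'
      (sub_pos.2 (grr_switch_lt_keep he₂ hg₁.le)).ne'
  subst hq₁'
  exact sum_lolohaWeight_mul_lolohaEst ℋ vu v (sum_lolohaUserWeight ℋ hne hnorm₁ hnorm₂)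
    (fun _ => sum_lolohaUserWeight_mul_ite ℋ (by omega) hne hnorm₁ hnorm₂
      fun hvx a => hpi _ _ hvx a a) hd

/-- **Unbiasedness of the LOLOHA estimator** under the LOLOHA generative model
with a pairwise-independent hash family: `E[f̂(v)] = f(v)` for every `v`. -/
theorem loloha_estimator_unbiased
    (V : Type) [Fintype V] [DecidableEq V] (k g n : ℕ)
    (hk : Fintype.card V = k) (hg : 2 ≤ g) (hn : 1 ≤ n)
    (ε₁ εinf : ℝ) (h₁ : 0 < ε₁) (h₂ : ε₁ < εinf)
    (εIRR : ℝ)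
    (hεIRR : εIRR = Real.log ((Real.exp (εinf + ε₁) - 1) / (Real.exp εinf - Real.exp ε₁)))
    (p₁ q₁ q₁' p₂ q₂ : ℝ)
    (hp₁ : p₁ = Real.exp εinf / (Real.exp εinf + g - 1))
    (hq₁ : q₁ = 1 / (Real.exp εinf + g - 1))
    (hq₁' : q₁' = 1 / (g : ℝ))
    (hp₂ : p₂ = Real.exp εIRR / (Real.exp εIRR + g - 1))
    (hq₂ : q₂ = 1 / (Real.exp εIRR + g - 1))
    (ℋ : Finset (V → Fin g)) (hne : ℋ.Nonempty)
    (hpi : ∀ v w : V, v ≠ w → ∀ a b : Fin g,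
      (ℋ.filter fun H => H v = a ∧ H w = b).card * g ^ 2 = ℋ.card)
    (vu : Fin n → V)
    (v : V) :
    ∑ ω : Fin n → LolohaSample V g,
        lolohaWeight V g n ℋ p₁ q₁ p₂ q₂ vu ω *
          lolohaEst V g n p₁ q₁' p₂ q₂ v ω =
      lolohaTrueFreq V n vu v :=
  loloha_estimator_unbiased_general V g n hg ε₁ εinf h₁ h₂ εIRR hεIRR p₁ q₁ q₁' p₂ q₂ hp₁ hq₁ hq₁'
    hp₂ hq₂ ℋ hne hpi vu v
end

section
/- Let 0 < ε₁ < ε∞ and set A = e^{ε∞}, E = e^{ε₁}, p₁ = 1/2, q₁ = 1/(A+1), p₂ = (A·E − 1)/(A − E + A·E − 1), q₂ = 1 − p₂, p_s = p₁p₂ + (1−p₁)q₂, and q_s = q₁p₂ + (1−q₁)q₂. Then p_s = 1/2, q_s = 1/(E+1), and p_s(1−q_s)/((1−p_s)q_s) = e^{ε₁}. -/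
/-- **Per-bit parameters of L-OSUE.** For `0 < ε₁ < εinf`, with `A = e^{εinf}`,
`E = e^{ε₁}`, `p₁ = 1/2`, `q₁ = 1/(A+1)`, `p₂ = (A·E − 1)/(A − E + A·E − 1)`,
`q₂ = 1 − p₂`, `p_s = p₁p₂ + (1−p₁)q₂`, `q_s = q₁p₂ + (1−q₁)q₂`, one has
`p_s = 1/2`, `q_s = 1/(E+1)` and `p_s(1−q_s)/((1−p_s)q_s) = e^{ε₁}`. -/
theorem losue_first_report_ldp_parameters
    (ε₁ εinf : ℝ) (h₁ : 0 < ε₁) (h₂ : ε₁ < εinf)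
    (A E p₁ q₁ p₂ q₂ ps qs : ℝ)
    (hA : A = Real.exp εinf) (hE : E = Real.exp ε₁)
    (hp₁ : p₁ = 1 / 2) (hq₁ : q₁ = 1 / (A + 1))
    (hp₂ : p₂ = (A * E - 1) / (A - E + A * E - 1)) (hq₂ : q₂ = 1 - p₂)
    (hps : ps = p₁ * p₂ + (1 - p₁) * q₂)
    (hqs : qs = q₁ * p₂ + (1 - q₁) * q₂) :
    ps = 1 / 2 ∧ qs = 1 / (E + 1) ∧
    ps * (1 - qs) / ((1 - ps) * qs) = Real.exp ε₁ := by
  have hE1 : 1 < E := by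
    rw [hE]; have := Real.exp_lt_exp.mpr h₁; simpa using this
  have hEA : E < A := by rw [hE, hA]; exact Real.exp_lt_exp.mpr h₂
  have hA1 : 1 < A := lt_trans hE1 hEA
  have hdpos : (0:ℝ) < A - E + A * E - 1 := by nlinarith
  have hd : A - E + A * E - 1 ≠ 0 := ne_of_gt hdpos
  have hA1' : A + 1 ≠ 0 := by linarith
  have hE1' : E + 1 ≠ 0 := by linarith
  have hPs : ps = 1 / 2 := by rw [hps, hp₁, hq₂]; ring
  have hQs : qs = 1 / (E + 1) := by
    rw [hqs, hq₁, hq₂, hp₂]; field_simp; ring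
  refine ⟨hPs, hQs, ?_⟩
  rw [hPs, hQs, ← hE]
  have hEpos : (0:ℝ) < E := by linarith
  field_simp
  ring
end

section
/- Let 0 < ε₁ < ε∞, n ≥ 1, and set A = e^{ε∞}, E = e^{ε₁}, p₁ = 1/2, q₁ = 1/(A+1), p₂ = (A·E − 1)/(A − E + A·E − 1), q₂ = 1 − p₂. Then the approximate variance V* = (p₂q₁ − q₂(q₁−1))·(−p₂q₁ + q₂(q₁−1) + 1)/(n·(p₁−q₁)²·(p₂−q₂)²) equals 4·e^{ε₁}/(n·(e^{ε₁} − 1)²) = 4e^{ε₁}/(n(e^{2ε₁} − 2e^{ε₁} + 1)). -/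
/-!
Both rounds act bitwise, so they compose to a single unary encoding with report probabilities
`p = p₁p₂ + (1 - p₁)q₂` and `q = q₁p₂ + (1 - q₁)q₂`; then `p - q = (p₁ - q₁)(p₂ - q₂)` and `V*` is
exactly the one-round approximate variance `q(1 - q)/(n(p - q)²)` of this composite.
For L-OSUE the denominator of `p₂` factors as `(A - 1)(E + 1)`, and the composite is
`p = 1/2`, `q = 1/(E + 1)`: optimized unary encoding at level `ε₁`, whose variance is
`4E/(n(E - 1)²)`.
-/

noncomputable def ueApproxVariance (n p q : ℝ) : ℝ :=
  q * (1 - q) / (n * (p - q) ^ 2)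

theorem twoRound_approxVariance_eq_ueApproxVariance (n p₁ q₁ p₂ q₂ : ℝ) :
    (p₂ * q₁ - q₂ * (q₁ - 1)) * (-(p₂ * q₁) + q₂ * (q₁ - 1) + 1) /
        (n * (p₁ - q₁) ^ 2 * (p₂ - q₂) ^ 2) =
      ueApproxVariance n (p₁ * p₂ + (1 - p₁) * q₂) (q₁ * p₂ + (1 - q₁) * q₂) := by
  unfold ueApproxVariance
  congr 1 <;> ring

theorem ueApproxVariance_oue (n E : ℝ) (hE : E + 1 ≠ 0) :
    ueApproxVariance n (1 / 2) (1 / (E + 1)) = 4 * E / (n * (E - 1) ^ 2) := by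
  have hvar : 1 / (E + 1) * (1 - 1 / (E + 1)) = E / (E + 1) ^ 2 := by field_simp; ring
  have hgap : 1 / 2 - 1 / (E + 1) = (E - 1) / (2 * (E + 1)) := by field_simp; ring
  rw [ueApproxVariance, hvar, hgap, div_pow]
  field_simp
  ring

theorem losue_composed_q (A E : ℝ) (hA : A ≠ 1) (hA' : A + 1 ≠ 0) (hE : E + 1 ≠ 0) :
    let p₂ := (A * E - 1) / (A - E + A * E - 1)
    1 / (A + 1) * p₂ + (1 - 1 / (A + 1)) * (1 - p₂) = 1 / (E + 1) := by
  have hA₁ : A - 1 ≠ 0 := sub_ne_zero.mpr hA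
  have hD : A - E + A * E - 1 = (A - 1) * (E + 1) := by ring
  simp only [hD]
  field_simp
  ring

theorem losue_approximate_variance_general
    (ε₁ εinf : ℝ) (h₁ : 0 < ε₁) (h₂ : ε₁ < εinf)
    (n : ℕ)
    (A E p₁ q₁ p₂ q₂ : ℝ)
    (hA : A = Real.exp εinf) (hE : E = Real.exp ε₁)
    (hp₁ : p₁ = 1 / 2) (hq₁ : q₁ = 1 / (A + 1))
    (hp₂ : p₂ = (A * E - 1) / (A - E + A * E - 1)) (hq₂ : q₂ = 1 - p₂) :
    (p₂ * q₁ - q₂ * (q₁ - 1)) * (-(p₂ * q₁) + q₂ * (q₁ - 1) + 1) /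
        ((n : ℝ) * (p₁ - q₁) ^ 2 * (p₂ - q₂) ^ 2) =
      4 * Real.exp ε₁ / ((n : ℝ) * (Real.exp ε₁ - 1) ^ 2) ∧
    4 * Real.exp ε₁ / ((n : ℝ) * (Real.exp ε₁ - 1) ^ 2) =
      4 * Real.exp ε₁ /
        ((n : ℝ) * (Real.exp (2 * ε₁) - 2 * Real.exp ε₁ + 1)) := by
  have hA₁ : A ≠ 1 := hA ▸ (Real.one_lt_exp_iff.mpr (h₁.trans h₂)).ne'
  have hA₀ : A + 1 ≠ 0 := by rw [hA]; positivity
  have hE₀ : E + 1 ≠ 0 := by rw [hE]; positivity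
  have hp : p₁ * p₂ + (1 - p₁) * q₂ = 1 / 2 := by rw [hp₁, hq₂]; ring
  have hq : q₁ * p₂ + (1 - q₁) * q₂ = 1 / (E + 1) := by
    rw [hq₁, hq₂, hp₂]
    exact losue_composed_q A E hA₁ hA₀ hE₀
  refine ⟨?_, ?_⟩
  · rw [twoRound_approxVariance_eq_ueApproxVariance, hp, hq, ueApproxVariance_oue _ _ hE₀, hE]
  · rw [two_mul, Real.exp_add]
    ring

/-- **Approximate variance of L-OSUE.** For `0 < ε₁ < εinf`, `n ≥ 1`, with
`A = e^{εinf}`, `E = e^{ε₁}`, `p₁ = 1/2`, `q₁ = 1/(A+1)`,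
`p₂ = (A·E − 1)/(A − E + A·E − 1)`, `q₂ = 1 − p₂`, the approximate variance
`V* = (p₂q₁ − q₂(q₁−1))·(−p₂q₁ + q₂(q₁−1) + 1)/(n·(p₁−q₁)²·(p₂−q₂)²)` equals
`4·e^{ε₁}/(n·(e^{ε₁} − 1)²) = 4e^{ε₁}/(n(e^{2ε₁} − 2e^{ε₁} + 1))`. -/
theorem losue_approximate_variance
    (ε₁ εinf : ℝ) (h₁ : 0 < ε₁) (h₂ : ε₁ < εinf)
    (n : ℕ) (hn : 1 ≤ n)
    (A E p₁ q₁ p₂ q₂ : ℝ)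
    (hA : A = Real.exp εinf) (hE : E = Real.exp ε₁)
    (hp₁ : p₁ = 1 / 2) (hq₁ : q₁ = 1 / (A + 1))
    (hp₂ : p₂ = (A * E - 1) / (A - E + A * E - 1)) (hq₂ : q₂ = 1 - p₂) :
    (p₂ * q₁ - q₂ * (q₁ - 1)) * (-(p₂ * q₁) + q₂ * (q₁ - 1) + 1) /
        ((n : ℝ) * (p₁ - q₁) ^ 2 * (p₂ - q₂) ^ 2) =
      4 * Real.exp ε₁ / ((n : ℝ) * (Real.exp ε₁ - 1) ^ 2) ∧
    4 * Real.exp ε₁ / ((n : ℝ) * (Real.exp ε₁ - 1) ^ 2) =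
      4 * Real.exp ε₁ /
        ((n : ℝ) * (Real.exp (2 * ε₁) - 2 * Real.exp ε₁ + 1)) :=
  losue_approximate_variance_general ε₁ εinf h₁ h₂ n A E p₁ q₁ p₂ q₂ hA hE hp₁ hq₁ hp₂ hq₂
end
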